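/- Combining maximality of augmenting sets with the distance bound: if S ∈ I1 ∩ I2 has no augmenting path of length 2 (i.e., S is maximal), Π is a maximal augmenting set in G(S) (where shortest augmenting paths have length 4), then |S ⊕ Π| ≥ (2/3)·r, where r is the maximum size of a common independent set. -/

import Mathlib

/-! Write `T = S ⊕ Π`. The set `(S \ A₁) ∪ B₂` is `M₁`-independent, lies in the `M₁`-span of `S`
and has `|S|` elements, so it has the same `M₁`-span as `S`; hence adding `B₁` keeps it
`M₁`-independent, and `S ∪ B₁` lies in the `M₁`-span of `T`. Symmetrically in `M₂`, so `T` is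
common independent. A path `s → x → t` in `G(T)` would contradict the maximality of `S`, and a
path `s → x → y → x' → t` would let `(B₁ + x, A₁ + y, B₂ + x')` extend `Π`. Finally Cunningham's
counting: for a maximum common independent set `R`, extending `T` by `R` in `M₁` and in `M₂` adds
sets `X₁`, `X₂` with `r ≤ |T| + |Xᵢ|`, and, with no short augmenting paths, `X₁` and `X₂` are
matched into disjoint parts of `T`, so `2r ≤ 3|T|`. -/

open Set

variable {α : Type*}

/-- Vertices of the exchange graph: `Sum.inl v` is an element of the ground set,
`Sum.inr false` is the source `s`, `Sum.inr true` is the sink `t`. -/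
abbrev ExV (α : Type*) := α ⊕ Bool

/-- Adjacency in the exchange graph `G(S)` of the common independent set `S`. -/
def exAdj (M₁ M₂ : Matroid α) (S : Set α) : ExV α → ExV α → Prop
  | Sum.inl u, Sum.inl v =>
      (u ∈ S ∧ v ∉ S ∧ M₁.Indep (insert v (S \ {u}))) ∨
      (u ∉ S ∧ v ∈ S ∧ M₂.Indep (insert u (S \ {v})))
  | Sum.inr false, Sum.inl v => v ∉ S ∧ M₁.Indep (insert v S)
  | Sum.inl v, Sum.inr true => v ∉ S ∧ M₂.Indep (insert v S)
  | _, _ => False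

/-- `l` is an `(s,t)`-path (list of vertices) in the exchange graph `G(S)`.
Its length (number of edges) is `l.length - 1`. -/
def IsSTPath (M₁ M₂ : Matroid α) (S : Set α) (l : List (ExV α)) : Prop :=
  l.Chain' (exAdj M₁ M₂ S) ∧ l.head? = some (Sum.inr false) ∧
    l.getLast? = some (Sum.inr true)

/-- `l` is a path from `s` to the element `v` in the exchange graph `G(S)`. -/
def IsSPathTo (M₁ M₂ : Matroid α) (S : Set α) (v : α) (l : List (ExV α)) : Prop :=
  l.Chain' (exAdj M₁ M₂ S) ∧ l.head? = some (Sum.inr false) ∧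
    l.getLast? = some (Sum.inl v)

/-- `v` is at distance exactly `i` from `s` in the exchange graph `G(S)`;
i.e. `v ∈ D_i`. -/
def InLayer (M₁ M₂ : Matroid α) (S : Set α) (i : ℕ) (v : α) : Prop :=
  (∃ l, IsSPathTo M₁ M₂ S v l ∧ l.length = i + 1) ∧
    ∀ l, IsSPathTo M₁ M₂ S v l → i + 1 ≤ l.length

/-- Shortest `(s,t)`-paths in `G(S)` have length exactly `4`. -/
def ShortestAugLenFour (M₁ M₂ : Matroid α) (S : Set α) : Prop :=
  (∃ l, IsSTPath M₁ M₂ S l ∧ l.length = 5) ∧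
    ∀ l, IsSTPath M₁ M₂ S l → 5 ≤ l.length

/-- `(B₁, A₁, B₂)` is an augmenting set in `G(S)`. -/
def IsAugSet (M₁ M₂ : Matroid α) (S B₁ A₁ B₂ : Set α) : Prop :=
  (∀ v ∈ B₁, InLayer M₁ M₂ S 1 v) ∧ (∀ v ∈ A₁, InLayer M₁ M₂ S 2 v) ∧
  (∀ v ∈ B₂, InLayer M₁ M₂ S 3 v) ∧
  B₁.ncard = A₁.ncard ∧ A₁.ncard = B₂.ncard ∧
  M₁.Indep (S ∪ B₁) ∧ M₂.Indep ((S ∪ B₁) \ A₁) ∧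
  M₁.Indep ((S \ A₁) ∪ B₂) ∧ M₂.Indep (S ∪ B₂)


lemma Set.encard_le_encard_sdiff_union {S A B : Set α} (hAS : A ⊆ S)
    (hAB : A.encard ≤ B.encard) (hdj : Disjoint S B) : S.encard ≤ ((S \ A) ∪ B).encard :=
  calc S.encard = (S \ A).encard + A.encard := (encard_sdiff_add_encard_of_subset hAS).symm
    _ ≤ (S \ A).encard + B.encard := by gcongr
    _ = ((S \ A) ∪ B).encard := (encard_union_eq (hdj.mono_left sdiff_subset)).symm

namespace Matroid

variable {M : Matroid α} {I J X Y Z : Set α} {e : α}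

lemma Indep.encard_le_of_subset_closure (hI : M.Indep I) (hIX : I ⊆ M.closure X) :
    I.encard ≤ X.encard :=
  calc I.encard ≤ M.eRk (M.closure X) := hI.encard_le_eRk_of_subset hIX
    _ = M.eRk X := M.eRk_closure_eq X
    _ ≤ X.encard := M.eRk_le_encard X

lemma Indep.closure_eq_of_subset_closure (hI : M.Indep I) (hX : X.Finite)
    (hIX : I ⊆ M.closure X) (hXI : X.encard ≤ I.encard) : M.closure I = M.closure X := by
  have hIfin : I.Finite :=
    finite_of_encard_le_coe ((hI.encard_le_of_subset_closure hIX).trans_eq hX.encard_eq_coe)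
  have hbasis : M.IsBasis I (M.closure X) := hI.isBasis_of_eRk_ge hIfin hIX <| by
    rw [eRk_closure_eq, hI.eRk_eq_encard]
    exact (M.eRk_le_encard X).trans hXI
  rw [hbasis.closure_eq_closure, closure_closure]

lemma Indep.union_indep_of_closure_eq (hYZ : M.Indep (Y ∪ Z)) (hX : M.Indep X)
    (hXY : M.closure X = M.closure Y) (hdj : Disjoint Y Z) : M.Indep (X ∪ Z) := by
  refine (hX.union_indep_iff_forall_notMem_closure_right (hYZ.subset subset_union_right)).2
    fun e he hecl => hYZ.notMem_closure_sdiff_of_mem (.inr he.1) ?_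
  rwa [union_sdiff_distrib, sdiff_singleton_eq_self (disjoint_right.1 hdj he.1),
    ← closure_union_closure_left_eq, ← hXY, closure_union_closure_left_eq]

lemma Indep.insert_indep_and_notMem_of_subset_closure (hI : M.Indep I)
    (hIJ : I ⊆ M.closure J) (h : M.Indep (insert e J)) (heJ : e ∉ J) :
    M.Indep (insert e I) ∧ e ∉ I := by
  have he : e ∈ M.E \ M.closure J := (Matroid.insert_indep_iff.1 h).2 heJ
  exact (hI.notMem_closure_iff he.1).1 fun heI =>
    he.2 (M.closure_subset_closure_of_subset_closure hIJ heI)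

/-- The elements `y` in question are those of the fundamental circuit of `e` other than `e`. -/
lemma Indep.mem_closure_setOf_insert_indep (hI : M.Indep I) (he : e ∈ M.closure I)
    (heI : e ∉ I) : e ∈ M.closure {y ∈ I | M.Indep (insert e (I \ {y}))} := by
  have hC := hI.fundCircuit_isCircuit he heI
  refine M.closure_subset_closure ?_
    (hC.mem_closure_sdiff_singleton_of_mem (M.mem_fundCircuit e I))
  rintro y ⟨hyC, hye : y ≠ e⟩
  refine ⟨((M.fundCircuit_subset_insert e I) hyC).resolve_left hye, ?_⟩
  rw [insert_sdiff_singleton_comm hye.symm]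
  exact (hI.mem_fundCircuit_iff he heI).1 hyC

lemma Indep.exists_subset_sdiff_insert_indep (hI : M.Indep I) (hJ : M.Indep J) :
    ∃ X ⊆ J \ I, J.encard ≤ I.encard + X.encard ∧ ∀ x ∈ X, M.Indep (insert x I) := by
  obtain ⟨B, hB, hIB⟩ := hI.subset_isBasis_of_subset (subset_union_left (t := J))
    (union_subset hI.subset_ground hJ.subset_ground)
  refine ⟨B \ I, fun x hx => ⟨(hB.subset hx.1).resolve_left hx.2, hx.2⟩, ?_,
    fun x hx => hB.indep.subset (insert_subset hx.1 hIB)⟩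
  calc J.encard ≤ B.encard := hJ.encard_le_of_subset_closure <| by
        rw [hB.closure_eq_closure]
        exact M.subset_closure_of_subset' subset_union_right hJ.subset_ground
    _ = I.encard + (B \ I).encard := by rw [add_comm, encard_sdiff_add_encard_of_subset hIB]

lemma Indep.encard_le_encard_setOf_exchange {T : Set α} (hT : M.Indep T) (hX : M.Indep X)
    (hXT : X ⊆ M.closure T) (hdj : Disjoint X T) :
    X.encard ≤ {y ∈ T | ∃ x ∈ X, M.Indep (insert x (T \ {y}))}.encard :=
  hX.encard_le_of_subset_closure fun x hx => by
    refine M.closure_subset_closure ?_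
      (hT.mem_closure_setOf_insert_indep (hXT hx) (disjoint_left.1 hdj hx))
    exact fun y hy => ⟨hy.1, x, hx, hy.2⟩

end Matroid

/-- `s → x → y → x' → t` is an `(s,t)`-path in the exchange graph `G(T)`. -/
structure IsAugPathFour (M₁ M₂ : Matroid α) (T : Set α) (x y x' : α) : Prop where
  first_notMem : x ∉ T
  mid_mem : y ∈ T
  last_notMem : x' ∉ T
  indep_insert_first : M₁.Indep (insert x T)
  indep_exchange_first : M₂.Indep (insert x (T \ {y}))
  indep_exchange_last : M₁.Indep (insert x' (T \ {y}))
  indep_insert_last : M₂.Indep (insert x' T)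

/-- `G(T)` has no `(s,t)`-path of length `2` or `4`. -/
def NoShortAugPath (M₁ M₂ : Matroid α) (T : Set α) : Prop :=
  (∀ x ∉ T, M₁.Indep (insert x T) → ¬ M₂.Indep (insert x T)) ∧
    ∀ x y x', ¬ IsAugPathFour M₁ M₂ T x y x'

lemma forall_not_indep_insert_of_subset_closure {M₁ M₂ : Matroid α} {S T : Set α}
    (hS₁ : M₁.Indep S) (hS₂ : M₂.Indep S)
    (hSmax : ∀ v, M₁.Indep (insert v S) → M₂.Indep (insert v S) → v ∈ S)
    (h₁ : S ⊆ M₁.closure T) (h₂ : S ⊆ M₂.closure T) :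
    ∀ x ∉ T, M₁.Indep (insert x T) → ¬ M₂.Indep (insert x T) := fun x hxT hx₁ hx₂ =>
  have ⟨hxS₁, hxS⟩ := hS₁.insert_indep_and_notMem_of_subset_closure h₁ hx₁ hxT
  hxS (hSmax x hxS₁ (hS₂.insert_indep_and_notMem_of_subset_closure h₂ hx₂ hxT).1)

theorem NoShortAugPath.two_mul_encard_le {M₁ M₂ : Matroid α} {T R : Set α}
    (h : NoShortAugPath M₁ M₂ T) (hT₁ : M₁.Indep T) (hT₂ : M₂.Indep T)
    (hR₁ : M₁.Indep R) (hR₂ : M₂.Indep R) : 2 * R.encard ≤ 3 * T.encard := by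
  obtain ⟨X₁, hX₁R, hRX₁, hX₁⟩ := hT₁.exists_subset_sdiff_insert_indep hR₁
  obtain ⟨X₂, hX₂R, hRX₂, hX₂⟩ := hT₂.exists_subset_sdiff_insert_indep hR₂
  have hX₁cl : X₁ ⊆ M₂.closure T := fun x hx => hT₂.mem_closure_iff'.2
    ⟨hR₂.subset_ground (hX₁R hx).1, fun h₂ => absurd h₂ (h.1 x (hX₁R hx).2 (hX₁ x hx))⟩
  have hX₂cl : X₂ ⊆ M₁.closure T := fun x hx => hT₁.mem_closure_iff'.2
    ⟨hR₁.subset_ground (hX₂R hx).1, fun h₁ => absurd (hX₂ x hx) (h.1 x (hX₂R hx).2 h₁)⟩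
  have hZ₁ := hT₂.encard_le_encard_setOf_exchange (hR₂.subset (hX₁R.trans sdiff_subset)) hX₁cl
    (disjoint_left.2 fun x hx => (hX₁R hx).2)
  have hZ₂ := hT₁.encard_le_encard_setOf_exchange (hR₁.subset (hX₂R.trans sdiff_subset)) hX₂cl
    (disjoint_left.2 fun x hx => (hX₂R hx).2)
  have hZ := encard_union_eq (s := {y ∈ T | ∃ x ∈ X₁, M₂.Indep (insert x (T \ {y}))})
    (t := {y ∈ T | ∃ x ∈ X₂, M₁.Indep (insert x (T \ {y}))}) <| disjoint_left.2 <| by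
      rintro y ⟨hy, x, hx, hxy⟩ ⟨-, x', hx', hx'y⟩
      exact h.2 x y x' ⟨(hX₁R hx).2, hy, (hX₂R hx').2, hX₁ x hx, hxy, hx'y, hX₂ x' hx'⟩
  have hZT := encard_le_encard (union_subset (sep_subset T _) (sep_subset T _)) |>.trans_eq' hZ
  calc 2 * R.encard ≤ (T.encard + X₁.encard) + (T.encard + X₂.encard) := by
        rw [two_mul]; exact add_le_add hRX₁ hRX₂
    _ ≤ 2 * T.encard + T.encard := by
        rw [two_mul, add_add_add_comm]; gcongr; exact (add_le_add hZ₁ hZ₂).trans hZT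
    _ = 3 * T.encard := by ring

section ExchangeGraph

open Sum

variable {M₁ M₂ : Matroid α} {S : Set α} {v : α} {l : List (ExV α)}

lemma isSPathTo_iff : IsSPathTo M₁ M₂ S v l ↔
    l.IsChain (exAdj M₁ M₂ S) ∧ l.head? = some (inr false) ∧ l.getLast? = some (inl v) :=
  Iff.rfl

lemma IsSPathTo.two_le_length (h : IsSPathTo M₁ M₂ S v l) : 2 ≤ l.length := by
  obtain ⟨-, ha, hd⟩ := isSPathTo_iff.1 h
  rcases l with _ | ⟨a, _ | ⟨b, l⟩⟩ <;> simp_all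

lemma isSPathTo_pair_iff {a b : ExV α} : IsSPathTo M₁ M₂ S v [a, b] ↔
    a = inr false ∧ b = inl v ∧ v ∉ S ∧ M₁.Indep (insert v S) := by
  simp only [isSPathTo_iff, List.isChain_pair, List.head?_cons, List.getLast?_cons_cons,
    List.getLast?_singleton, Option.some.injEq]
  constructor
  · rintro ⟨h, rfl, rfl⟩
    exact ⟨rfl, rfl, h⟩
  · rintro ⟨rfl, rfl, h⟩
    exact ⟨h, rfl, rfl⟩

lemma isSPathTo_triple_iff {a b c : ExV α} : IsSPathTo M₁ M₂ S v [a, b, c] ↔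
    a = inr false ∧ c = inl v ∧ exAdj M₁ M₂ S a b ∧ exAdj M₁ M₂ S b c := by
  simp only [isSPathTo_iff, List.isChain_cons_cons, List.IsChain.singleton, and_true,
    List.head?_cons, Option.some.injEq, List.getLast?_cons_cons, List.getLast?_singleton]
  tauto

lemma isSPathTo_quad_iff {a b c d : ExV α} : IsSPathTo M₁ M₂ S v [a, b, c, d] ↔
    a = inr false ∧ d = inl v ∧ exAdj M₁ M₂ S a b ∧ exAdj M₁ M₂ S b c ∧ exAdj M₁ M₂ S c d := by
  simp only [isSPathTo_iff, List.isChain_cons_cons, List.IsChain.singleton, and_true,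
    List.head?_cons, Option.some.injEq, List.getLast?_cons_cons, List.getLast?_singleton]
  tauto

lemma IsSPathTo.notMem_indep_of_length_eq_two (h : IsSPathTo M₁ M₂ S v l) (hl : l.length = 2) :
    v ∉ S ∧ M₁.Indep (insert v S) := by
  obtain ⟨a, b, rfl⟩ := List.length_eq_two.1 hl
  exact (isSPathTo_pair_iff.1 h).2.2

lemma IsSPathTo.mem_of_length_eq_three (h : IsSPathTo M₁ M₂ S v l) (hl : l.length = 3) :
    v ∈ S ∧ ∃ u, (u ∉ S ∧ M₁.Indep (insert u S)) ∧ M₂.Indep (insert u (S \ {v})) := by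
  obtain ⟨a, b, c, rfl⟩ := List.length_eq_three.1 hl
  obtain ⟨rfl, rfl, hab, hbc⟩ := isSPathTo_triple_iff.1 h
  rcases b with u | _ | _ <;> simp only [exAdj] at hab hbc
  obtain ⟨-, hv, huv⟩ := hbc.resolve_left fun h => hab.1 h.1
  exact ⟨hv, u, hab, huv⟩

lemma IsSPathTo.notMem_of_length_eq_four (h : IsSPathTo M₁ M₂ S v l) (hl : l.length = 4) :
    v ∉ S ∧ ∃ y ∈ S, (∃ u, (u ∉ S ∧ M₁.Indep (insert u S)) ∧ M₂.Indep (insert u (S \ {y}))) ∧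
      M₁.Indep (insert v (S \ {y})) := by
  obtain ⟨a, b, c, d, rfl⟩ := List.length_eq_four.1 hl
  obtain ⟨rfl, rfl, hab, hbc, hcd⟩ := isSPathTo_quad_iff.1 h
  rcases b with u | _ | _ <;> rcases c with y | _ | _ <;> simp only [exAdj] at hab hbc hcd
  obtain ⟨-, hy, huy⟩ := hbc.resolve_left fun h => hab.1 h.1
  obtain ⟨-, hv, hyv⟩ := hcd.resolve_right fun h => h.1 hy
  exact ⟨hv, y, hy, ⟨u, hab, huy⟩, hyv⟩

lemma inLayer_one_iff : InLayer M₁ M₂ S 1 v ↔ v ∉ S ∧ M₁.Indep (insert v S) :=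
  ⟨fun ⟨⟨_, hl, hlen⟩, _⟩ => hl.notMem_indep_of_length_eq_two hlen, fun h =>
    ⟨⟨_, isSPathTo_pair_iff.2 ⟨rfl, rfl, h⟩, rfl⟩, fun _ hl => hl.two_le_length⟩⟩

lemma inLayer_two_iff : InLayer M₁ M₂ S 2 v ↔
    v ∈ S ∧ ∃ u, InLayer M₁ M₂ S 1 u ∧ M₂.Indep (insert u (S \ {v})) := by
  simp only [inLayer_one_iff]
  refine ⟨fun ⟨⟨_, hl, hlen⟩, _⟩ => hl.mem_of_length_eq_three hlen, ?_⟩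
  rintro ⟨hvS, u, hu, huv⟩
  refine ⟨⟨[inr false, inl u, inl v], isSPathTo_triple_iff.2
    ⟨rfl, rfl, hu, Or.inr ⟨hu.1, hvS, huv⟩⟩, rfl⟩, fun l hl => ?_⟩
  by_contra! hlen
  exact (hl.notMem_indep_of_length_eq_two (by have := hl.two_le_length; omega)).1 hvS

lemma inLayer_three_iff : InLayer M₁ M₂ S 3 v ↔ v ∉ S ∧ ¬ M₁.Indep (insert v S) ∧
    ∃ y, InLayer M₁ M₂ S 2 y ∧ M₁.Indep (insert v (S \ {y})) := by
  constructor
  · rintro ⟨⟨l, hl, hlen⟩, hmin⟩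
    obtain ⟨hvS, y, hy, hu, hyv⟩ := hl.notMem_of_length_eq_four hlen
    refine ⟨hvS, fun h => ?_, y, inLayer_two_iff.2 ⟨hy, by simpa only [inLayer_one_iff]⟩, hyv⟩
    simpa using hmin _ (isSPathTo_pair_iff.2 ⟨rfl, rfl, hvS, h⟩)
  · rintro ⟨hvS, hv, y, hy, hyv⟩
    obtain ⟨hyS, u, hu, huy⟩ := inLayer_two_iff.1 hy
    have hu' := inLayer_one_iff.1 hu
    refine ⟨⟨[inr false, inl u, inl y, inl v], isSPathTo_quad_iff.2
      ⟨rfl, rfl, hu', Or.inr ⟨hu'.1, hyS, huy⟩, Or.inl ⟨hyS, hvS, hyv⟩⟩, rfl⟩, fun l hl => ?_⟩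
    by_contra! hlen
    obtain hlen | hlen : l.length = 2 ∨ l.length = 3 := by have := hl.two_le_length; omega
    · exact hv (hl.notMem_indep_of_length_eq_two hlen).2
    · exact hvS (hl.mem_of_length_eq_three hlen).1

lemma inLayer_two_of_encard_lt {J : Set α} {y : α} (hS₂ : M₂.Indep S) (hy : y ∈ S)
    (hJ : M₂.Indep J) (hyJ : y ∉ J) (hlt : (S \ {y}).encard < J.encard)
    (hJS : ∀ e ∈ J, e ∉ S → InLayer M₁ M₂ S 1 e) : InLayer M₁ M₂ S 2 y := by
  obtain ⟨e, ⟨heJ, heSy⟩, he⟩ := (hS₂.subset sdiff_subset).augment hJ hlt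
  have heS : e ∉ S := fun h => heSy ⟨h, fun hey => hyJ (hey ▸ heJ)⟩
  exact inLayer_two_iff.2 ⟨hy, e, hJS e heJ heS, he⟩

lemma inLayer_three_of_notMem_closure {x : α} {D : Set α} (hS₁ : M₁.Indep S)
    (hD : ∀ y ∈ D, InLayer M₁ M₂ S 2 y) (hxS : x ∉ S) (hxE : x ∈ M₁.E)
    (hx : ¬ M₁.Indep (insert x S)) (hxD : x ∉ M₁.closure (S \ D)) : InLayer M₁ M₂ S 3 x := by
  have hxcl : x ∈ M₁.closure S := hS₁.mem_closure_iff'.2 ⟨hxE, fun h => absurd h hx⟩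
  obtain ⟨y, ⟨-, hxy⟩, hyD⟩ : ∃ y ∈ {y ∈ S | M₁.Indep (insert x (S \ {y}))}, y ∈ D := by
    by_contra! h
    refine hxD (M₁.closure_subset_closure ?_ (hS₁.mem_closure_setOf_insert_indep hxcl hxS))
    exact fun y hy => ⟨hy.1, h y hy⟩
  exact inLayer_three_iff.2 ⟨hxS, hx, y, hD y hyD, hxy⟩

end ExchangeGraph

/-- `S ⊕ Π` for `Π = (B₁, A₁, B₂)`. -/
def augment (S B₁ A₁ B₂ : Set α) : Set α := (S ∪ B₁ ∪ B₂) \ A₁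

namespace IsAugSet

variable {M₁ M₂ : Matroid α} {S B₁ A₁ B₂ : Set α} {x y x' : α}

lemma indep₁ (h : IsAugSet M₁ M₂ S B₁ A₁ B₂) : M₁.Indep S := by
  have ⟨_, _, _, _, _, hi₁, _⟩ := h
  exact hi₁.subset subset_union_left

lemma indep₂ (h : IsAugSet M₁ M₂ S B₁ A₁ B₂) : M₂.Indep S := by
  have ⟨_, _, _, _, _, _, _, _, hi₄⟩ := h
  exact hi₄.subset subset_union_left

lemma two_subset (h : IsAugSet M₁ M₂ S B₁ A₁ B₂) : A₁ ⊆ S :=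
  fun v hv => (inLayer_two_iff.1 (h.2.1 v hv)).1

lemma disjoint_one (h : IsAugSet M₁ M₂ S B₁ A₁ B₂) : Disjoint S B₁ :=
  disjoint_right.2 fun v hv => (inLayer_one_iff.1 (h.1 v hv)).1

lemma disjoint_three (h : IsAugSet M₁ M₂ S B₁ A₁ B₂) : Disjoint S B₂ :=
  disjoint_right.2 fun v hv => (inLayer_three_iff.1 (h.2.2.1 v hv)).1

lemma disjoint_one_three (h : IsAugSet M₁ M₂ S B₁ A₁ B₂) : Disjoint B₁ B₂ :=
  disjoint_left.2 fun v h₁ h₃ =>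
    (inLayer_three_iff.1 (h.2.2.1 v h₃)).2.1 (inLayer_one_iff.1 (h.1 v h₁)).2

lemma subset_ground (h : IsAugSet M₁ M₂ S B₁ A₁ B₂) : S ∪ B₁ ∪ B₂ ⊆ M₁.E := by
  have ⟨_, _, _, _, _, hi₁, _, hi₃, _⟩ := h
  exact union_subset hi₁.subset_ground (subset_union_right.trans hi₃.subset_ground)

lemma union_sdiff_eq (h : IsAugSet M₁ M₂ S B₁ A₁ B₂) : (S ∪ B₁) \ A₁ = (S \ A₁) ∪ B₁ := by
  rw [union_sdiff_distrib, (disjoint_of_subset_left h.two_subset h.disjoint_one).sdiff_eq_right]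

lemma augment_eq_union_one (h : IsAugSet M₁ M₂ S B₁ A₁ B₂) :
    augment S B₁ A₁ B₂ = ((S \ A₁) ∪ B₂) ∪ B₁ := by
  have := h.two_subset
  have := disjoint_left.1 h.disjoint_one
  have := disjoint_left.1 h.disjoint_three
  ext v
  grind [augment]

lemma augment_eq_union_three (h : IsAugSet M₁ M₂ S B₁ A₁ B₂) :
    augment S B₁ A₁ B₂ = ((S \ A₁) ∪ B₁) ∪ B₂ := by
  rw [h.augment_eq_union_one, union_right_comm]

lemma three_subset_closure (h : IsAugSet M₁ M₂ S B₁ A₁ B₂) : B₂ ⊆ M₁.closure S := fun v hv =>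
  h.indep₁.mem_closure_iff'.2 ⟨h.subset_ground (.inr hv),
    fun hi => absurd hi (inLayer_three_iff.1 (h.2.2.1 v hv)).2.1⟩

lemma one_subset_closure (h : IsAugSet M₁ M₂ S B₁ A₁ B₂)
    (hSmax : ∀ v, M₁.Indep (insert v S) → M₂.Indep (insert v S) → v ∈ S) :
    B₁ ⊆ M₂.closure S := by
  intro v hv
  obtain ⟨hvS, hv₁⟩ := inLayer_one_iff.1 (h.1 v hv)
  have ⟨_, _, _, _, _, _, hi₂, _⟩ := h
  exact h.indep₂.mem_closure_iff'.2 ⟨hi₂.subset_ground ⟨.inr hv, (hvS <| h.two_subset ·)⟩,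
    fun hi => absurd (hSmax v hv₁ hi) hvS⟩

section Finite

variable [M₁.Finite]

lemma encard_le_encard_sdiff_union_one (h : IsAugSet M₁ M₂ S B₁ A₁ B₂) :
    S.encard ≤ ((S \ A₁) ∪ B₁).encard := by
  have hE := h.subset_ground
  refine encard_le_encard_sdiff_union h.two_subset (le_of_eq ?_) h.disjoint_one
  rw [← (M₁.set_finite A₁ (h.two_subset.trans (by grind))).cast_ncard_eq,
    ← (M₁.set_finite B₁ (by grind)).cast_ncard_eq, h.2.2.2.1]

lemma encard_le_encard_sdiff_union_three (h : IsAugSet M₁ M₂ S B₁ A₁ B₂) :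
    S.encard ≤ ((S \ A₁) ∪ B₂).encard := by
  have hE := h.subset_ground
  refine encard_le_encard_sdiff_union h.two_subset (le_of_eq ?_) h.disjoint_three
  rw [← (M₁.set_finite A₁ (h.two_subset.trans (by grind))).cast_ncard_eq,
    ← (M₁.set_finite B₂ (by grind)).cast_ncard_eq, h.2.2.2.2.1]

lemma closure₁_sdiff_union_eq (h : IsAugSet M₁ M₂ S B₁ A₁ B₂) :
    M₁.closure ((S \ A₁) ∪ B₂) = M₁.closure S := by
  have hSE := h.indep₁.subset_ground
  have ⟨_, _, _, _, _, _, _, hi₃, _⟩ := h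
  exact hi₃.closure_eq_of_subset_closure (M₁.set_finite S hSE)
    (union_subset (sdiff_subset.trans (M₁.subset_closure S hSE)) h.three_subset_closure)
    h.encard_le_encard_sdiff_union_three

lemma closure₂_sdiff_union_eq (h : IsAugSet M₁ M₂ S B₁ A₁ B₂)
    (hSmax : ∀ v, M₁.Indep (insert v S) → M₂.Indep (insert v S) → v ∈ S) :
    M₂.closure ((S \ A₁) ∪ B₁) = M₂.closure S := by
  have hSfin := M₁.set_finite S h.indep₁.subset_ground
  have ⟨_, _, _, _, _, _, hi₂, _⟩ := h
  rw [h.union_sdiff_eq] at hi₂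
  exact hi₂.closure_eq_of_subset_closure hSfin
    (union_subset (sdiff_subset.trans (M₂.subset_closure S h.indep₂.subset_ground))
      (h.one_subset_closure hSmax)) h.encard_le_encard_sdiff_union_one

lemma indep₁_augment (h : IsAugSet M₁ M₂ S B₁ A₁ B₂) :
    M₁.Indep (augment S B₁ A₁ B₂) ∧ S ∪ B₁ ⊆ M₁.closure (augment S B₁ A₁ B₂) := by
  have hcl := h.closure₁_sdiff_union_eq
  rw [h.augment_eq_union_one]
  have ⟨_, _, _, _, _, hi₁, _, hi₃, _⟩ := h
  exact ⟨hi₁.union_indep_of_closure_eq hi₃ hcl h.disjoint_one,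
    (M₁.subset_closure _ hi₁.subset_ground).trans (M₁.closure_union_congr_left hcl.symm).subset⟩

lemma indep₂_augment (h : IsAugSet M₁ M₂ S B₁ A₁ B₂)
    (hSmax : ∀ v, M₁.Indep (insert v S) → M₂.Indep (insert v S) → v ∈ S) :
    M₂.Indep (augment S B₁ A₁ B₂) ∧ S ∪ B₂ ⊆ M₂.closure (augment S B₁ A₁ B₂) := by
  have hcl := h.closure₂_sdiff_union_eq hSmax
  rw [h.augment_eq_union_three]
  have ⟨_, _, _, _, _, _, hi₂, _, hi₄⟩ := h
  rw [h.union_sdiff_eq] at hi₂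
  exact ⟨hi₄.union_indep_of_closure_eq hi₂ hcl h.disjoint_three,
    (M₂.subset_closure _ hi₄.subset_ground).trans (M₂.closure_union_congr_left hcl.symm).subset⟩

lemma indep_insert_first (h : IsAugSet M₁ M₂ S B₁ A₁ B₂)
    (hp : IsAugPathFour M₁ M₂ (augment S B₁ A₁ B₂) x y x') :
    M₁.Indep (insert x (S ∪ B₁)) ∧ x ∉ S ∪ B₁ := by
  have hcl := h.indep₁_augment.2
  have ⟨_, _, _, _, _, hi₁, _⟩ := h
  exact hi₁.insert_indep_and_notMem_of_subset_closure hcl hp.indep_insert_first hp.first_notMem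

lemma indep_insert_last (h : IsAugSet M₁ M₂ S B₁ A₁ B₂)
    (hSmax : ∀ v, M₁.Indep (insert v S) → M₂.Indep (insert v S) → v ∈ S)
    (hp : IsAugPathFour M₁ M₂ (augment S B₁ A₁ B₂) x y x') :
    M₂.Indep (insert x' (S ∪ B₂)) ∧ x' ∉ S ∪ B₂ := by
  have hcl := (h.indep₂_augment hSmax).2
  have ⟨_, _, _, _, _, _, _, _, hi₄⟩ := h
  exact hi₄.insert_indep_and_notMem_of_subset_closure hcl hp.indep_insert_last hp.last_notMem

lemma inLayer_one_of_isAugPathFour (h : IsAugSet M₁ M₂ S B₁ A₁ B₂)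
    (hp : IsAugPathFour M₁ M₂ (augment S B₁ A₁ B₂) x y x') : InLayer M₁ M₂ S 1 x :=
  have ⟨hx, hxSB⟩ := h.indep_insert_first hp
  inLayer_one_iff.2 ⟨(hxSB <| .inl ·), hx.subset (insert_subset_insert subset_union_left)⟩

/-- If the middle vertex were in `B₂` (resp. `B₁`), the first (resp. last) vertex would be free
over a set with the same span as `S`, against the maximality of `S`. -/
lemma mem_sdiff_of_isAugPathFour (h : IsAugSet M₁ M₂ S B₁ A₁ B₂)
    (hSmax : ∀ v, M₁.Indep (insert v S) → M₂.Indep (insert v S) → v ∈ S)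
    (hp : IsAugPathFour M₁ M₂ (augment S B₁ A₁ B₂) x y x') : y ∈ S \ A₁ := by
  have := h.two_subset
  have := disjoint_left.1 h.disjoint_one
  have := disjoint_left.1 h.disjoint_three
  have := disjoint_left.1 h.disjoint_one_three
  have := hp.mid_mem
  have ⟨hx, hxSB⟩ := h.indep_insert_first hp
  have ⟨hx', hx'SB⟩ := h.indep_insert_last hSmax hp
  have hyB₂ : y ∉ B₂ := fun hy => hxSB <| .inl <|
    hSmax x (hx.subset (insert_subset_insert subset_union_left))
      (h.indep₂.insert_indep_and_notMem_of_subset_closure (J := (S \ A₁) ∪ B₁)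
        (h.closure₂_sdiff_union_eq hSmax ▸ M₂.subset_closure S h.indep₂.subset_ground)
        (hp.indep_exchange_first.subset (insert_subset_insert (by intro v hv; grind [augment])))
        (by grind)).1
  have hyB₁ : y ∉ B₁ := fun hy => hx'SB <| .inl <|
    hSmax x' (h.indep₁.insert_indep_and_notMem_of_subset_closure (J := (S \ A₁) ∪ B₂)
        (h.closure₁_sdiff_union_eq ▸ M₁.subset_closure S h.indep₁.subset_ground)
        (hp.indep_exchange_last.subset (insert_subset_insert (by intro v hv; grind [augment])))
        (by grind)).1
      (hx'.subset (insert_subset_insert subset_union_left))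
  grind [augment]

/-- Augment `S - y` by `x + ((S \ A₁) ∪ B₁) - y`, which is `M₂`-independent and has `|S|`
elements. -/
lemma inLayer_two_of_isAugPathFour (h : IsAugSet M₁ M₂ S B₁ A₁ B₂)
    (hSmax : ∀ v, M₁.Indep (insert v S) → M₂.Indep (insert v S) → v ∈ S)
    (hp : IsAugPathFour M₁ M₂ (augment S B₁ A₁ B₂) x y x') : InLayer M₁ M₂ S 2 y := by
  have hyS := h.mem_sdiff_of_isAugPathFour hSmax hp
  have := (h.indep_insert_first hp).2
  have := h.two_subset
  have := disjoint_left.1 h.disjoint_one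
  have hxQ : x ∉ ((S \ A₁) ∪ B₁) \ {y} := by grind
  refine inLayer_two_of_encard_lt (J := insert x (((S \ A₁) ∪ B₁) \ {y})) h.indep₂ hyS.1
    (hp.indep_exchange_first.subset (insert_subset_insert ?_)) (by grind) ?_ ?_
  · intro v hv
    grind [augment]
  · calc (S \ {y}).encard < S.encard :=
          (M₁.set_finite S h.indep₁.subset_ground).sdiff.encard_lt_encard
            (sdiff_singleton_ssubset.2 hyS.1)
      _ ≤ ((S \ A₁) ∪ B₁).encard := h.encard_le_encard_sdiff_union_one
      _ = _ := by rw [encard_insert_of_notMem hxQ, encard_sdiff_singleton_add_one (.inl hyS)]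
  · rintro e (rfl | ⟨he | he, -⟩) heS
    exacts [h.inLayer_one_of_isAugPathFour hp, absurd he.1 heS, h.1 e he]

/-- The last vertex is spanned by `S` in `M₁`, but not by `S` minus `A₁` and the middle vertex. -/
lemma inLayer_three_of_isAugPathFour (h : IsAugSet M₁ M₂ S B₁ A₁ B₂)
    (hSmax : ∀ v, M₁.Indep (insert v S) → M₂.Indep (insert v S) → v ∈ S)
    (hp : IsAugPathFour M₁ M₂ (augment S B₁ A₁ B₂) x y x') : InLayer M₁ M₂ S 3 x' := by
  have ⟨hx', hx'SB⟩ := h.indep_insert_last hSmax hp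
  have hcl := (Matroid.insert_indep_iff.1 hp.indep_exchange_last).2 fun hx => hp.last_notMem hx.1
  have hx'₁ : ¬ M₁.Indep (insert x' S) := fun hi =>
    hx'SB (.inl (hSmax x' hi (hx'.subset (insert_subset_insert subset_union_left))))
  refine inLayer_three_of_notMem_closure h.indep₁
    (forall_mem_insert.2 ⟨h.inLayer_two_of_isAugPathFour hSmax hp, h.2.1⟩) (hx'SB <| .inl ·)
    hcl.1 hx'₁ fun hx => hcl.2 (M₁.closure_subset_closure ?_ hx)
  intro v hv
  grind [augment]

theorem insert_of_isAugPathFour (h : IsAugSet M₁ M₂ S B₁ A₁ B₂)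
    (hSmax : ∀ v, M₁.Indep (insert v S) → M₂.Indep (insert v S) → v ∈ S)
    (hp : IsAugPathFour M₁ M₂ (augment S B₁ A₁ B₂) x y x') :
    IsAugSet M₁ M₂ S (insert x B₁) (insert y A₁) (insert x' B₂) := by
  have ⟨hx, hxSB⟩ := h.indep_insert_first hp
  have ⟨hx', hx'SB⟩ := h.indep_insert_last hSmax hp
  have hyS := h.mem_sdiff_of_isAugPathFour hSmax hp
  have hfin : ∀ X ⊆ S ∪ B₁ ∪ B₂, X.Finite := fun X hX => M₁.set_finite X (hX.trans h.subset_ground)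
  have := h.two_subset
  have := disjoint_left.1 h.disjoint_one
  have := disjoint_left.1 h.disjoint_three
  have := disjoint_left.1 h.disjoint_one_three
  refine ⟨forall_mem_insert.2 ⟨h.inLayer_one_of_isAugPathFour hp, h.1⟩,
    forall_mem_insert.2 ⟨h.inLayer_two_of_isAugPathFour hSmax hp, h.2.1⟩,
    forall_mem_insert.2 ⟨h.inLayer_three_of_isAugPathFour hSmax hp, h.2.2.1⟩, ?_, ?_,
    by rwa [union_insert], hp.indep_exchange_first.subset ?_, hp.indep_exchange_last.subset ?_,
    by rwa [union_insert]⟩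
  · rw [ncard_insert_of_notMem (hxSB <| .inr ·) (hfin B₁ (by grind)),
      ncard_insert_of_notMem hyS.2 (hfin A₁ (by grind)), h.2.2.2.1]
  · rw [ncard_insert_of_notMem hyS.2 (hfin A₁ (by grind)),
      ncard_insert_of_notMem (hx'SB <| .inr ·) (hfin B₂ (by grind)), h.2.2.2.2.1]
  all_goals intro v hv; grind [augment]

theorem noShortAugPath_augment (h : IsAugSet M₁ M₂ S B₁ A₁ B₂)
    (hSmax : ∀ v, M₁.Indep (insert v S) → M₂.Indep (insert v S) → v ∈ S)
    (hmax : ∀ B₁' A₁' B₂', IsAugSet M₁ M₂ S B₁' A₁' B₂' →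
      B₁ ⊆ B₁' → A₁ ⊆ A₁' → B₂ ⊆ B₂' → B₁' = B₁ ∧ A₁' = A₁ ∧ B₂' = B₂) :
    NoShortAugPath M₁ M₂ (augment S B₁ A₁ B₂) := by
  refine ⟨forall_not_indep_insert_of_subset_closure h.indep₁ h.indep₂ hSmax
    (subset_union_left.trans h.indep₁_augment.2)
    (subset_union_left.trans (h.indep₂_augment hSmax).2), fun x y x' hp => hp.first_notMem ?_⟩
  obtain ⟨hB, -, -⟩ := hmax _ _ _ (h.insert_of_isAugPathFour hSmax hp)
    (subset_insert _ _) (subset_insert _ _) (subset_insert _ _)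
  have hx : x ∈ B₁ := hB ▸ mem_insert x B₁
  exact ⟨.inl (.inr hx), fun hA => disjoint_left.1 h.disjoint_one (h.two_subset hA) hx⟩

end Finite

end IsAugSet

theorem maximal_augset_two_thirds_general {α : Type*} (M₁ M₂ : Matroid α)
    (hfin : M₁.E.Finite)
    (S : Set α)
    (hSmax : ∀ v, M₁.Indep (insert v S) → M₂.Indep (insert v S) → v ∈ S)
    (B₁ A₁ B₂ : Set α) (haug : IsAugSet M₁ M₂ S B₁ A₁ B₂)
    (hmax : ∀ B₁' A₁' B₂', IsAugSet M₁ M₂ S B₁' A₁' B₂' →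
      B₁ ⊆ B₁' → A₁ ⊆ A₁' → B₂ ⊆ B₂' → B₁' = B₁ ∧ A₁' = A₁ ∧ B₂' = B₂)
    (r : ℕ) (hr : IsGreatest {n | ∃ T, M₁.Indep T ∧ M₂.Indep T ∧ T.ncard = n} r) :
    (2 / 3 : ℚ) * r ≤ ((S ∪ B₁ ∪ B₂) \ A₁).ncard := by
  have : M₁.Finite := ⟨hfin⟩
  obtain ⟨⟨R, hR₁, hR₂, rfl⟩, -⟩ := hr
  have hT₁ := haug.indep₁_augment.1
  have hbound := (haug.noShortAugPath_augment hSmax hmax).two_mul_encard_le hT₁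
    (haug.indep₂_augment hSmax).1 hR₁ hR₂
  rw [← hR₁.finite.cast_ncard_eq, ← hT₁.finite.cast_ncard_eq] at hbound
  have hbound' : (2 * R.ncard : ℚ) ≤ 3 * (augment S B₁ A₁ B₂).ncard := by exact_mod_cast hbound
  change _ ≤ ((augment S B₁ A₁ B₂).ncard : ℚ)
  linarith

/-- If `S` is a maximal common independent set whose exchange graph has shortest
`(s,t)`-path length exactly `4`, and `Π` is a maximal augmenting set in `G(S)`,
then `|S ⊕ Π| ≥ (2/3) r`. -/
theorem maximal_augset_two_thirds {α : Type*} (M₁ M₂ : Matroid α)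
    (hE : M₂.E = M₁.E) (hfin : M₁.E.Finite)
    (S : Set α) (hS₁ : M₁.Indep S) (hS₂ : M₂.Indep S)
    (hSmax : ∀ v, M₁.Indep (insert v S) → M₂.Indep (insert v S) → v ∈ S)
    (hlen : ShortestAugLenFour M₁ M₂ S)
    (B₁ A₁ B₂ : Set α) (haug : IsAugSet M₁ M₂ S B₁ A₁ B₂)
    (hmax : ∀ B₁' A₁' B₂', IsAugSet M₁ M₂ S B₁' A₁' B₂' →
      B₁ ⊆ B₁' → A₁ ⊆ A₁' → B₂ ⊆ B₂' → B₁' = B₁ ∧ A₁' = A₁ ∧ B₂' = B₂)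
    (r : ℕ) (hr : IsGreatest {n | ∃ T, M₁.Indep T ∧ M₂.Indep T ∧ T.ncard = n} r) :
    (2 / 3 : ℚ) * r ≤ ((S ∪ B₁ ∪ B₂) \ A₁).ncard :=
  maximal_augset_two_thirds_general M₁ M₂ hfin S hSmax B₁ A₁ B₂ haug hmax r hr
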